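/- arXiv:1104.4396 — 4 statements merged into one kernel-verified Lean document; each statement's English description precedes it below -/
import Mathlib

section
/- Let ψ₁, ψ₂ : (0,1) → ℝ be measurable functions such that ∫₀¹ (x(1−x))^{3/2} ψ_j(x)² dx < ∞ for j = 1, 2. Let G(x,y) be the joint CDF of a pair of uniform(0,1) random variables. Then ∬_{0<x<y<1} |G(x,y) − xy| |ψ₁(x) ψ₂(y)| dx dy is bounded by 2 (∫₀¹ (x(1−x))^{3/2} ψ₁(x)² dx)^{1/2} (∫₀¹ (y(1−y))^{3/2} ψ₂(y)² dy)^{1/2}, and in particular is finite. -/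
/-!
For `x < y` the Fréchet–Hoeffding bounds `max(0, x + y - 1) ≤ G(x,y) ≤ min(x,y)` give
`|G(x,y) - xy| ≤ √(x(1-x)) √(y(1-y))`. Cauchy–Schwarz on the triangle `0 < x < y < 1` with the
weight `w = (x/(1-y))^{1/2}` leaves one factor integrable in `y` alone and the other in `x` alone:
`∫ₓ¹ (1-y)^{-1/2} dy = 2√(1-x)` and `∫₀ʸ x^{-1/2} dx = 2√y` turn the two squared factors into
`2 ∫₀¹ (x(1-x))^{3/2} ψⱼ(x)² dx`.
-/

open MeasureTheory Set

lemma abs_sub_mul_le_sqrt_mul_sqrt {r a b : ℝ} (hr : 0 ≤ r) (hra : r ≤ a) (hrb : r ≤ b)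
    (hab : a + b - 1 ≤ r) : |r - a * b| ≤ √(a * (1 - a)) * √(b * (1 - b)) := by
  rw [← Real.sqrt_mul (by nlinarith)]
  apply Real.abs_le_sqrt
  rcases le_total (a * b) r with h | h
  · have h₁ : r - a * b ≤ a * (1 - b) := by nlinarith
    have h₂ : r - a * b ≤ b * (1 - a) := by nlinarith
    nlinarith [mul_le_mul h₁ h₂ (by linarith) (by nlinarith)]
  · have h₁ : a * b - r ≤ a * b := by linarith
    have h₂ : a * b - r ≤ (1 - a) * (1 - b) := by nlinarith
    nlinarith [mul_le_mul h₁ h₂ (by linarith) (by nlinarith)]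

lemma abs_measureReal_inter_sub_mul_le {Ω : Type*} [MeasurableSpace Ω] (P : Measure Ω)
    [IsProbabilityMeasure P] (A : Set Ω) {B : Set Ω} (hB : MeasurableSet B) :
    |P.real (A ∩ B) - P.real A * P.real B|
      ≤ √(P.real A * (1 - P.real A)) * √(P.real B * (1 - P.real B)) := by
  refine abs_sub_mul_le_sqrt_mul_sqrt measureReal_nonneg (measureReal_mono inter_subset_left)
    (measureReal_mono inter_subset_right) ?_
  have := measureReal_union_add_inter (s := A) hB (μ := P)
  linarith [measureReal_le_one (μ := P) (s := A ∪ B)]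

lemma measureReal_setOf_le_of_map_eq {Ω : Type*} [MeasurableSpace Ω] {P : Measure Ω}
    {U : Ω → ℝ} (hU : Measurable U) (hUunif : P.map U = volume.restrict (Ioo 0 1))
    {x : ℝ} (hx0 : 0 ≤ x) (hx1 : x < 1) : P.real {ω | U ω ≤ x} = x := by
  have hIic : Iic x ∩ Ioo 0 1 = Ioc 0 x := by
    ext t
    simp only [mem_inter_iff, mem_Iic, mem_Ioo, mem_Ioc]
    exact ⟨fun h => ⟨h.2.1, h.1⟩, fun h => ⟨h.2, h.1, h.2.trans_lt hx1⟩⟩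
  rw [measureReal_def, show {ω | U ω ≤ x} = U ⁻¹' Iic x from rfl,
    ← Measure.map_apply hU measurableSet_Iic, hUunif, Measure.restrict_apply measurableSet_Iic,
    hIic, Real.volume_Ioc, sub_zero, ENNReal.toReal_ofReal hx0]

lemma abs_measureReal_le_and_le_sub_mul_le {Ω : Type*} [MeasurableSpace Ω] (P : Measure Ω)
    [IsProbabilityMeasure P] {U V : Ω → ℝ} (hU : Measurable U) (hV : Measurable V)
    (hUunif : P.map U = volume.restrict (Ioo 0 1)) (hVunif : P.map V = volume.restrict (Ioo 0 1))
    {x y : ℝ} (hx0 : 0 ≤ x) (hx1 : x < 1) (hy0 : 0 ≤ y) (hy1 : y < 1) :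
    |P.real {ω | U ω ≤ x ∧ V ω ≤ y} - x * y| ≤ √(x * (1 - x)) * √(y * (1 - y)) := by
  have h := abs_measureReal_inter_sub_mul_le P {ω | U ω ≤ x} (B := {ω | V ω ≤ y})
    (hV measurableSet_Iic)
  rwa [measureReal_setOf_le_of_map_eq hU hUunif hx0 hx1,
    measureReal_setOf_le_of_map_eq hV hVunif hy0 hy1] at h

lemma ofReal_mul_abs_mul_le_weighted {c u v w a b : ℝ} (hu : 0 ≤ u) (hv : 0 ≤ v) (hw : 0 < w)
    (hc : c ≤ √u * √v) :
    ENNReal.ofReal (c * |a * b|)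
      ≤ ENNReal.ofReal (u * a ^ 2 * w) ^ (1/2 : ℝ)
          * ENNReal.ofReal (v * b ^ 2 * w⁻¹) ^ (1/2 : ℝ) := by
  rw [ENNReal.ofReal_rpow_of_nonneg (by positivity) (by norm_num),
    ENNReal.ofReal_rpow_of_nonneg (by positivity) (by norm_num),
    ← ENNReal.ofReal_mul (by positivity), ← Real.mul_rpow (by positivity) (by positivity),
    ← Real.sqrt_eq_rpow]
  refine ENNReal.ofReal_le_ofReal ?_
  calc c * |a * b| ≤ √u * √v * |a * b| := mul_le_mul_of_nonneg_right hc (abs_nonneg _)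
    _ = √(u * v * (a * b) ^ 2) := by
      rw [Real.sqrt_mul (by positivity), Real.sqrt_mul hu, Real.sqrt_sq_eq_abs]
    _ = √(u * a ^ 2 * w * (v * b ^ 2 * w⁻¹)) := by
      congr 1
      field_simp

lemma lintegral_Ioo_rpow {r : ℝ} (hr : -1 < r) {a : ℝ} (ha : 0 ≤ a) :
    ∫⁻ t in Ioo 0 a, ENNReal.ofReal (t ^ r) = ENNReal.ofReal (a ^ (r + 1) / (r + 1)) := by
  have hint : IntegrableOn (fun t : ℝ => t ^ r) (Ioc 0 a) :=
    (intervalIntegrable_iff_integrableOn_Ioc_of_le ha).1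
      (intervalIntegral.intervalIntegrable_rpow' hr)
  rw [← ofReal_integral_eq_lintegral_ofReal (hint.mono_set Ioo_subset_Ioc_self)
    ((ae_restrict_mem measurableSet_Ioo).mono fun t ht => Real.rpow_nonneg ht.1.le r),
    ← integral_Ioc_eq_integral_Ioo, ← intervalIntegral.integral_of_le ha, integral_rpow (.inl hr),
    Real.zero_rpow (by linarith), sub_zero]

lemma lintegral_Ioo_one_sub_rpow {r : ℝ} (hr : -1 < r) {x : ℝ} (hx : x ≤ 1) :
    ∫⁻ y in Ioo x 1, ENNReal.ofReal ((1 - y) ^ r)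
      = ENNReal.ofReal ((1 - x) ^ (r + 1) / (r + 1)) := by
  have hpre : (fun y : ℝ => 1 - y) ⁻¹' Ioo 0 (1 - x) = Ioo x 1 := by
    rw [preimage_const_sub_Ioo, sub_sub_cancel, sub_zero]
  rw [← hpre, (Measure.measurePreserving_sub_left volume (1 : ℝ)).setLIntegral_comp_preimage
    (f := fun t => ENNReal.ofReal (t ^ r)) measurableSet_Ioo (by fun_prop),
    lintegral_Ioo_rpow hr (by linarith)]

lemma setLIntegral_triangle_eq_indicator (F : ℝ × ℝ → ENNReal) :
    ∫⁻ p in {p : ℝ × ℝ | 0 < p.1 ∧ p.1 < p.2 ∧ p.2 < 1}, F p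
      = ∫⁻ p in Ioo 0 1 ×ˢ Ioo 0 1, {p : ℝ × ℝ | p.1 < p.2}.indicator F p := by
  have hT : {p : ℝ × ℝ | 0 < p.1 ∧ p.1 < p.2 ∧ p.2 < 1}
      = {p | p.1 < p.2} ∩ Ioo 0 1 ×ˢ Ioo 0 1 := by
    ext ⟨x, y⟩
    simp only [mem_ofPred_eq, mem_inter_iff, mem_prod, mem_Ioo]
    constructor
    · rintro ⟨h0, hxy, h1⟩; exact ⟨hxy, ⟨h0, by linarith⟩, by linarith, h1⟩
    · rintro ⟨hxy, ⟨h0, -⟩, -, h1⟩; exact ⟨h0, hxy, h1⟩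
  rw [lintegral_indicator (measurableSet_lt measurable_fst measurable_snd),
    Measure.restrict_restrict (measurableSet_lt measurable_fst measurable_snd), hT]

lemma setLIntegral_triangle_eq_iterated {F : ℝ × ℝ → ENNReal} (hF : Measurable F) :
    ∫⁻ p in {p : ℝ × ℝ | 0 < p.1 ∧ p.1 < p.2 ∧ p.2 < 1}, F p
      = ∫⁻ x in Ioo 0 1, ∫⁻ y in Ioo x 1, F (x, y) := by
  rw [setLIntegral_triangle_eq_indicator, Measure.volume_eq_prod, setLIntegral_prod _
    (hF.indicator (measurableSet_lt measurable_fst measurable_snd)).aemeasurable]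
  refine setLIntegral_congr_fun measurableSet_Ioo fun x hx => ?_
  change ∫⁻ y in Ioo 0 1, (Ioi x).indicator (fun y => F (x, y)) y = _
  rw [lintegral_indicator measurableSet_Ioi, Measure.restrict_restrict measurableSet_Ioi,
    Ioi_inter_Ioo, max_eq_left hx.1.le]

lemma setLIntegral_triangle_eq_iterated_symm {F : ℝ × ℝ → ENNReal} (hF : Measurable F) :
    ∫⁻ p in {p : ℝ × ℝ | 0 < p.1 ∧ p.1 < p.2 ∧ p.2 < 1}, F p
      = ∫⁻ y in Ioo 0 1, ∫⁻ x in Ioo 0 y, F (x, y) := by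
  rw [setLIntegral_triangle_eq_indicator, Measure.volume_eq_prod, setLIntegral_prod_symm _
    (hF.indicator (measurableSet_lt measurable_fst measurable_snd)).aemeasurable]
  refine setLIntegral_congr_fun measurableSet_Ioo fun y hy => ?_
  change ∫⁻ x in Ioo 0 1, (Iio y).indicator (fun x => F (x, y)) x = _
  rw [lintegral_indicator measurableSet_Iio, Measure.restrict_restrict measurableSet_Iio,
    Iio_inter_Ioo, min_eq_left hy.2.le]

lemma setLIntegral_ofReal_const_mul {α : Type*} [MeasurableSpace α] {μ : Measure α} {s : Set α}
    (hs : MeasurableSet s) {f : α → ℝ} (hf : IntegrableOn f s μ) (hf0 : ∀ x ∈ s, 0 ≤ f x)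
    {c : ℝ} (hc : 0 ≤ c) :
    ∫⁻ x in s, ENNReal.ofReal (c * f x) ∂μ = ENNReal.ofReal (c * ∫ x in s, f x ∂μ) := by
  rw [← integral_const_mul, ofReal_integral_eq_lintegral_ofReal (hf.const_mul c)
    (ae_restrict_of_forall_mem hs fun x hx => mul_nonneg hc (hf0 x hx))]

lemma rpow_three_halves_mul_sq_nonneg (ψ : ℝ → ℝ) {x : ℝ} (hx : x ∈ Ioo (0 : ℝ) 1) :
    0 ≤ (x * (1 - x)) ^ ((3:ℝ)/2) * ψ x ^ 2 :=
  mul_nonneg (Real.rpow_nonneg (mul_nonneg hx.1.le (sub_nonneg.2 hx.2.le)) _) (sq_nonneg _)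

lemma mul_one_sub_rpow_three_halves {x : ℝ} (hx0 : 0 ≤ x) (hx1 : x ≤ 1) :
    (x * (1 - x)) ^ ((3:ℝ)/2) = x * (1 - x) * (x ^ (1/2 : ℝ) * (1 - x) ^ (1/2 : ℝ)) := by
  rw [show (3:ℝ)/2 = 1 + 1/2 by norm_num, Real.rpow_add' (by nlinarith) (by norm_num),
    Real.rpow_one, Real.mul_rpow hx0 (by linarith)]

lemma setLIntegral_triangle_weighted_fst {ψ : ℝ → ℝ} (hψ : Measurable ψ)
    (hint : IntegrableOn (fun x => (x * (1 - x)) ^ ((3:ℝ)/2) * ψ x ^ 2) (Ioo 0 1)) :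
    ∫⁻ p in {p : ℝ × ℝ | 0 < p.1 ∧ p.1 < p.2 ∧ p.2 < 1},
        ENNReal.ofReal (p.1 * (1 - p.1) * ψ p.1 ^ 2 * (p.1 / (1 - p.2)) ^ (1/2 : ℝ))
      = ENNReal.ofReal (2 * ∫ x in Ioo 0 1, (x * (1 - x)) ^ ((3:ℝ)/2) * ψ x ^ 2) := by
  rw [setLIntegral_triangle_eq_iterated (by fun_prop), ← setLIntegral_ofReal_const_mul
    measurableSet_Ioo hint (fun _ => rpow_three_halves_mul_sq_nonneg ψ) zero_le_two]
  refine setLIntegral_congr_fun measurableSet_Ioo fun x hx => ?_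
  have hc : 0 ≤ x * (1 - x) * ψ x ^ 2 * x ^ (1/2 : ℝ) := by
    have := sub_pos.2 hx.2; have := hx.1
    positivity
  calc ∫⁻ y in Ioo x 1, ENNReal.ofReal (x * (1 - x) * ψ x ^ 2 * (x / (1 - y)) ^ (1/2 : ℝ))
      = ∫⁻ y in Ioo x 1, ENNReal.ofReal (x * (1 - x) * ψ x ^ 2 * x ^ (1/2 : ℝ))
          * ENNReal.ofReal ((1 - y) ^ (-(1/2) : ℝ)) := by
        refine setLIntegral_congr_fun measurableSet_Ioo fun y hy => ?_
        rw [← ENNReal.ofReal_mul hc, Real.div_rpow hx.1.le (by linarith [hy.2]),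
          Real.rpow_neg (by linarith [hy.2]), div_eq_mul_inv]
        ring_nf
    _ = ENNReal.ofReal (x * (1 - x) * ψ x ^ 2 * x ^ (1/2 : ℝ))
          * ENNReal.ofReal ((1 - x) ^ (1/2 : ℝ) / (1/2)) := by
        rw [lintegral_const_mul _ (by fun_prop), lintegral_Ioo_one_sub_rpow (by norm_num) hx.2.le]
        norm_num
    _ = ENNReal.ofReal (2 * ((x * (1 - x)) ^ ((3:ℝ)/2) * ψ x ^ 2)) := by
        rw [← ENNReal.ofReal_mul hc, mul_one_sub_rpow_three_halves hx.1.le hx.2.le]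
        ring_nf

lemma setLIntegral_triangle_weighted_snd {ψ : ℝ → ℝ} (hψ : Measurable ψ)
    (hint : IntegrableOn (fun x => (x * (1 - x)) ^ ((3:ℝ)/2) * ψ x ^ 2) (Ioo 0 1)) :
    ∫⁻ p in {p : ℝ × ℝ | 0 < p.1 ∧ p.1 < p.2 ∧ p.2 < 1},
        ENNReal.ofReal (p.2 * (1 - p.2) * ψ p.2 ^ 2 * ((p.1 / (1 - p.2)) ^ (1/2 : ℝ))⁻¹)
      = ENNReal.ofReal (2 * ∫ x in Ioo 0 1, (x * (1 - x)) ^ ((3:ℝ)/2) * ψ x ^ 2) := by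
  rw [setLIntegral_triangle_eq_iterated_symm (by fun_prop), ← setLIntegral_ofReal_const_mul
    measurableSet_Ioo hint (fun _ => rpow_three_halves_mul_sq_nonneg ψ) zero_le_two]
  refine setLIntegral_congr_fun measurableSet_Ioo fun y hy => ?_
  have hc : 0 ≤ y * (1 - y) * ψ y ^ 2 * (1 - y) ^ (1/2 : ℝ) := by
    have := sub_pos.2 hy.2; have := hy.1
    positivity
  calc ∫⁻ x in Ioo 0 y, ENNReal.ofReal (y * (1 - y) * ψ y ^ 2 * ((x / (1 - y)) ^ (1/2 : ℝ))⁻¹)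
      = ∫⁻ x in Ioo 0 y, ENNReal.ofReal (y * (1 - y) * ψ y ^ 2 * (1 - y) ^ (1/2 : ℝ))
          * ENNReal.ofReal (x ^ (-(1/2) : ℝ)) := by
        refine setLIntegral_congr_fun measurableSet_Ioo fun x hx => ?_
        rw [← ENNReal.ofReal_mul hc, Real.div_rpow hx.1.le (by linarith [hy.2]),
          Real.rpow_neg hx.1.le, inv_div, div_eq_mul_inv]
        ring_nf
    _ = ENNReal.ofReal (y * (1 - y) * ψ y ^ 2 * (1 - y) ^ (1/2 : ℝ))
          * ENNReal.ofReal (y ^ (1/2 : ℝ) / (1/2)) := by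
        rw [lintegral_const_mul _ (by fun_prop), lintegral_Ioo_rpow (by norm_num) hy.1.le]
        norm_num
    _ = ENNReal.ofReal (2 * ((y * (1 - y)) ^ ((3:ℝ)/2) * ψ y ^ 2)) := by
        rw [← ENNReal.ofReal_mul hc, mul_one_sub_rpow_three_halves hy.1.le hy.2.le]
        ring_nf

lemma ofReal_two_mul_rpow_half_mul {a b : ℝ} (ha : 0 ≤ a) (hb : 0 ≤ b) :
    ENNReal.ofReal (2 * a) ^ (1/2 : ℝ) * ENNReal.ofReal (2 * b) ^ (1/2 : ℝ)
      = ENNReal.ofReal (2 * a ^ (1/2 : ℝ) * b ^ (1/2 : ℝ)) := by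
  rw [ENNReal.ofReal_rpow_of_nonneg (by positivity) (by norm_num),
    ENNReal.ofReal_rpow_of_nonneg (by positivity) (by norm_num),
    ← ENNReal.ofReal_mul (by positivity), Real.mul_rpow zero_le_two ha,
    Real.mul_rpow zero_le_two hb]
  congr 1
  have h2 : (2 : ℝ) ^ (1/2 : ℝ) * 2 ^ (1/2 : ℝ) = 2 := by
    rw [← Real.rpow_add zero_lt_two]; norm_num
  linear_combination a ^ (1/2 : ℝ) * b ^ (1/2 : ℝ) * h2

/-- Cauchy–Schwarz bound for `∬_{0<x<y<1} |G(x,y)−xy| |ψ₁(x)ψ₂(y)| dx dy`, where `G` is the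
joint CDF of a pair of uniform(0,1) random variables and the `ψⱼ` satisfy the weighted
square-integrability condition `∫₀¹ (x(1−x))^{3/2} ψⱼ(x)² dx < ∞`. In particular the
double integral is finite. -/
theorem copula_weighted_integral_bound
    {Ω : Type*} [MeasurableSpace Ω] (P : Measure Ω) [IsProbabilityMeasure P]
    (U V : Ω → ℝ) (hUmeas : Measurable U) (hVmeas : Measurable V)
    (hUunif : Measure.map U P = volume.restrict (Ioo (0:ℝ) 1))
    (hVunif : Measure.map V P = volume.restrict (Ioo (0:ℝ) 1))
    (G : ℝ → ℝ → ℝ)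
    (hG : ∀ x y, G x y = (P {ω | U ω ≤ x ∧ V ω ≤ y}).toReal)
    (ψ₁ ψ₂ : ℝ → ℝ) (hψ₁ : Measurable ψ₁) (hψ₂ : Measurable ψ₂)
    (hint₁ : IntegrableOn (fun x => (x * (1 - x)) ^ ((3:ℝ)/2) * (ψ₁ x) ^ 2) (Ioo (0:ℝ) 1))
    (hint₂ : IntegrableOn (fun x => (x * (1 - x)) ^ ((3:ℝ)/2) * (ψ₂ x) ^ 2) (Ioo (0:ℝ) 1)) :
    ∫⁻ p in {p : ℝ × ℝ | 0 < p.1 ∧ p.1 < p.2 ∧ p.2 < 1},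
        ENNReal.ofReal (|G p.1 p.2 - p.1 * p.2| * |ψ₁ p.1 * ψ₂ p.2|)
      ≤ ENNReal.ofReal
          (2 * (∫ x in Ioo (0:ℝ) 1, (x * (1 - x)) ^ ((3:ℝ)/2) * (ψ₁ x) ^ 2) ^ ((1:ℝ)/2)
             * (∫ y in Ioo (0:ℝ) 1, (y * (1 - y)) ^ ((3:ℝ)/2) * (ψ₂ y) ^ 2) ^ ((1:ℝ)/2)) := by
  calc _ ≤ ∫⁻ p in {p : ℝ × ℝ | 0 < p.1 ∧ p.1 < p.2 ∧ p.2 < 1},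
          ENNReal.ofReal (p.1 * (1 - p.1) * ψ₁ p.1 ^ 2 * (p.1 / (1 - p.2)) ^ (1/2 : ℝ)) ^ (1/2 : ℝ)
          * ENNReal.ofReal (p.2 * (1 - p.2) * ψ₂ p.2 ^ 2 * ((p.1 / (1 - p.2)) ^ (1/2 : ℝ))⁻¹)
            ^ (1/2 : ℝ) := by
        refine setLIntegral_mono (by fun_prop) fun ⟨x, y⟩ ⟨hx, hxy, hy⟩ =>
          ofReal_mul_abs_mul_le_weighted (by nlinarith) (by nlinarith)
            (Real.rpow_pos_of_pos (div_pos hx (by linarith)) _) (hG x y ▸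
              abs_measureReal_le_and_le_sub_mul_le P hUmeas hVmeas hUunif hVunif hx.le
                (hxy.trans hy) (hx.trans hxy).le hy)
    _ ≤ _ := ENNReal.lintegral_mul_norm_pow_le (by fun_prop) (by fun_prop) (by norm_num)
          (by norm_num) (by norm_num)
    _ = _ := by
      rw [setLIntegral_triangle_weighted_fst hψ₁ hint₁,
        setLIntegral_triangle_weighted_snd hψ₂ hint₂, ofReal_two_mul_rpow_half_mul
          (setIntegral_nonneg measurableSet_Ioo fun _ => rpow_three_halves_mul_sq_nonneg ψ₁)
          (setIntegral_nonneg measurableSet_Ioo fun _ => rpow_three_halves_mul_sq_nonneg ψ₂)]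
end

section
/- Let γ : (0,1) → ℝ be continuously differentiable with ∫₀¹ (x(1−x))^{3/2} (γ'(x))² dx < ∞ and γ Riemann integrable on (0,1). Then (1/√n) ∑_{i=1}^n γ(i/(n+1)) − √n ∫₀¹ γ(x) dx → 0 as n → ∞. -/
/-!
Let `c = 1 / (2 (n + 1))` and cut `[c, 1 - c]` into `n` cells of length `2 c` centred at the
sample points `i / (n + 1)`. On a cell, a sample value differs from the cell average of `γ` by
at most the integral of `|γ'|` over the cell, so the Riemann sum is within `∫_c^{1-c} |γ'|` of
`(n + 1) ∫_c^{1-c} γ`. Integrating `2 |γ'| ≤ ε w γ'² + (ε w)⁻¹` for the weight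
`w x = (x (1 - x))^{3/2}`, with `∫_t^{1-t} w⁻¹ = O(t^{-1/2})` and `ε = t^{-1/4}`, gives
`∫_t^{1-t} |γ'| = O(t^{-1/4})`. Comparing with `γ (1/2)` this also yields
`|γ x| = O(min x (1 - x) ^ (-1/4))`, so the two end pieces `(n + 1) ∫_0^c γ` and
`(n + 1) ∫_{1-c}^1 γ` are `O((n + 1) c^{3/4}) = O(c^{-1/4})`. Altogether the sum differs from
`n ∫ γ` by `O(n^{1/4}) = o(√n)`.
-/

open MeasureTheory Set Filter Topology

theorem two_mul_abs_le_mul_sq_add_inv {s : ℝ} (hs : 0 < s) (u : ℝ) :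
    2 * |u| ≤ s * u ^ 2 + s⁻¹ := by
  have key : 0 ≤ (s * |u| - 1) ^ 2 / s := by positivity
  have : (s * |u| - 1) ^ 2 / s = s * u ^ 2 + s⁻¹ - 2 * |u| := by
    field_simp
    rw [← sq_abs u]
    ring
  linarith

section Calculus

variable {f f' : ℝ → ℝ} {a b : ℝ}

theorem abs_sub_le_integral_abs_deriv (hf : ∀ x ∈ Icc a b, HasDerivAt f (f' x) x)
    (hf' : IntervalIntegrable f' volume a b) {c d : ℝ} (hc : c ∈ Icc a b) (hd : d ∈ Icc a b) :
    |f d - f c| ≤ ∫ x in a..b, |f' x| := by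
  wlog hcd : c ≤ d generalizing c d
  · rw [abs_sub_comm]
    exact this hd hc (le_of_not_ge hcd)
  have hcdI : uIcc c d ⊆ Icc a b := by
    rw [uIcc_of_le hcd]
    exact Icc_subset_Icc hc.1 hd.2
  have hcd_uIcc : uIcc c d ⊆ uIcc a b := hcdI.trans Icc_subset_uIcc
  rw [← intervalIntegral.integral_eq_sub_of_hasDerivAt (fun x hx => hf x (hcdI hx))
    (hf'.mono_set hcd_uIcc)]
  calc |∫ x in c..d, f' x| ≤ ∫ x in c..d, |f' x| :=
        intervalIntegral.abs_integral_le_integral_abs hcd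
    _ ≤ ∫ x in a..b, |f' x| :=
      intervalIntegral.integral_mono_interval hc.1 hcd hd.2
        (ae_of_all _ fun _ => abs_nonneg _) hf'.abs

theorem abs_mul_sub_integral_le (hab : a ≤ b) (hf : ∀ x ∈ Icc a b, HasDerivAt f (f' x) x)
    (hf' : IntervalIntegrable f' volume a b) {t : ℝ} (ht : t ∈ Icc a b) :
    |(b - a) * f t - ∫ x in a..b, f x| ≤ (b - a) * ∫ x in a..b, |f' x| := by
  have hfint : IntervalIntegrable f volume a b :=
    ContinuousOn.intervalIntegrable fun x hx =>
      (hf x (by rwa [uIcc_of_le hab] at hx)).continuousAt.continuousWithinAt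
  have hconst : (b - a) * f t - ∫ x in a..b, f x = ∫ x in a..b, (f t - f x) := by
    rw [intervalIntegral.integral_sub intervalIntegrable_const hfint,
      intervalIntegral.integral_const, smul_eq_mul]
  have hbound := intervalIntegral.norm_integral_le_of_norm_le_const
    (C := ∫ x in a..b, |f' x|) (f := fun x => f t - f x) fun x hx => by
      rw [uIoc_of_le hab] at hx
      exact abs_sub_le_integral_abs_deriv hf hf' ⟨hx.1.le, hx.2⟩ ht
  rwa [hconst, mul_comm, ← abs_of_nonneg (sub_nonneg.2 hab)]

theorem abs_mul_sum_sub_integral_le {h : ℝ} (hh : 0 ≤ h) {n : ℕ} {t : ℕ → ℝ}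
    (ht : ∀ j < n, t j ∈ Icc (a + j * h) (a + (j + 1) * h))
    (hf : ∀ x ∈ Icc a (a + n * h), HasDerivAt f (f' x) x)
    (hf' : IntervalIntegrable f' volume a (a + n * h)) :
    |h * ∑ j ∈ Finset.range n, f (t j) - ∫ x in a..a + n * h, f x|
      ≤ h * ∫ x in a..a + n * h, |f' x| := by
  set p : ℕ → ℝ := fun j => a + j * h
  have hp_succ (j : ℕ) : p (j + 1) = a + (j + 1) * h := by simp [p]
  have hcell {j : ℕ} (hj : j < n) : Icc (p j) (p (j + 1)) ⊆ Icc a (a + n * h) := by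
    have : (j : ℝ) + 1 ≤ n := by exact_mod_cast hj
    rw [hp_succ]
    exact Icc_subset_Icc (le_add_of_nonneg_right (by positivity)) (by gcongr)
  have hcell_uIcc {j : ℕ} (hj : j < n) : uIcc (p j) (p (j + 1)) ⊆ uIcc a (a + n * h) := by
    rw [uIcc_of_le (by rw [hp_succ]; simp only [p]; gcongr; linarith),
      uIcc_of_le (le_add_of_nonneg_right (by positivity))]
    exact hcell hj
  have hfcont : ContinuousOn f (Icc a (a + n * h)) := fun x hx =>
    (hf x hx).continuousAt.continuousWithinAt
  have hfint : IntervalIntegrable f volume a (a + n * h) :=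
    hfcont.intervalIntegrable_of_Icc (le_add_of_nonneg_right (by positivity))
  have hsum (g : ℝ → ℝ) (hg : IntervalIntegrable g volume a (a + n * h)) :
      ∑ j ∈ Finset.range n, ∫ x in p j..p (j + 1), g x = ∫ x in a..a + n * h, g x := by
    simpa [p] using intervalIntegral.sum_integral_adjacent_intervals
      (a := p) fun j hj => hg.mono_set (hcell_uIcc hj)
  rw [← hsum f hfint, ← hsum _ hf'.abs, Finset.mul_sum, Finset.mul_sum,
    ← Finset.sum_sub_distrib]
  refine (Finset.abs_sum_le_sum_abs _ _).trans (Finset.sum_le_sum fun j hj => ?_)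
  have hj := Finset.mem_range.1 hj
  have hlen : p (j + 1) - p j = h := by rw [hp_succ]; ring
  have := abs_mul_sub_integral_le (by linarith) (fun x hx => hf x (hcell hj hx))
    (hf'.mono_set (hcell_uIcc hj)) (t := t j) (by rw [hp_succ]; exact ht j hj)
  rwa [hlen] at this

end Calculus

theorem two_mul_integral_abs_le {g w : ℝ → ℝ} {a b ε : ℝ} (hab : a ≤ b) (hε : 0 < ε)
    (hw : ∀ x ∈ Icc a b, 0 < w x) (hg : IntervalIntegrable g volume a b)
    (hwg : IntervalIntegrable (fun x => w x * g x ^ 2) volume a b)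
    (hw' : IntervalIntegrable (fun x => (w x)⁻¹) volume a b) :
    2 * ∫ x in a..b, |g x|
      ≤ ε * (∫ x in a..b, w x * g x ^ 2) + ε⁻¹ * ∫ x in a..b, (w x)⁻¹ := by
  rw [← intervalIntegral.integral_const_mul, ← intervalIntegral.integral_const_mul,
    ← intervalIntegral.integral_const_mul, ← intervalIntegral.integral_add
      (hwg.const_mul ε) (hw'.const_mul ε⁻¹)]
  refine intervalIntegral.integral_mono_on hab (hg.abs.const_mul 2)
    ((hwg.const_mul ε).add (hw'.const_mul ε⁻¹)) fun x hx => ?_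
  have := two_mul_abs_le_mul_sq_add_inv (mul_pos hε (hw x hx)) (g x)
  rw [mul_inv] at this
  linarith

theorem integral_rpow_le_of_lt_neg_one {a b r : ℝ} (hr : r < -1) (ha : 0 < a) (hab : a ≤ b) :
    ∫ x in a..b, x ^ r ≤ a ^ (r + 1) / (-r - 1) := by
  have h0 : (0 : ℝ) ∉ uIcc a b := by
    rw [uIcc_of_le hab]
    exact fun h => ha.not_ge h.1
  rw [integral_rpow (Or.inr ⟨by linarith, h0⟩)]
  have hb : 0 ≤ b ^ (r + 1) := Real.rpow_nonneg (ha.le.trans hab) _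
  rw [← neg_div_neg_eq, neg_sub, neg_add']
  gcongr
  · linarith
  · linarith

theorem abs_integral_le_of_abs_le_rpow {g : ℝ → ℝ} {K r c : ℝ} (hr : -1 < r) (hc : 0 ≤ c)
    (hg : IntervalIntegrable g volume 0 c) (hbound : ∀ x ∈ Ioo 0 c, |g x| ≤ K * x ^ r) :
    |∫ x in 0..c, g x| ≤ K * c ^ (r + 1) / (r + 1) := by
  calc |∫ x in 0..c, g x| ≤ ∫ x in 0..c, |g x| :=
        intervalIntegral.abs_integral_le_integral_abs hc
    _ ≤ ∫ x in 0..c, K * x ^ r :=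
      intervalIntegral.integral_mono_on_of_le_Ioo hc hg.abs
        ((intervalIntegral.intervalIntegrable_rpow' hr).const_mul K) hbound
    _ = K * c ^ (r + 1) / (r + 1) := by
      rw [intervalIntegral.integral_const_mul, integral_rpow (Or.inl hr),
        Real.zero_rpow (by linarith), sub_zero, mul_div_assoc]

theorem abs_integral_left_end_le {g : ℝ → ℝ} {K r c : ℝ} (hr : -1 < r) (hc0 : 0 ≤ c)
    (hc : c ≤ 1 / 2) (hg : IntervalIntegrable g volume 0 c)
    (hbound : ∀ x ∈ Ioo 0 1, |g x| ≤ K * min x (1 - x) ^ r) :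
    |∫ x in 0..c, g x| ≤ K * c ^ (r + 1) / (r + 1) :=
  abs_integral_le_of_abs_le_rpow hr hc0 hg fun x hx => by
    simpa only [min_eq_left (show x ≤ 1 - x by linarith [hx.2])] using
      hbound x ⟨hx.1, by linarith [hx.2]⟩

theorem abs_integral_right_end_le {g : ℝ → ℝ} {K r c : ℝ} (hr : -1 < r) (hc0 : 0 ≤ c)
    (hc : c ≤ 1 / 2) (hg : IntervalIntegrable g volume (1 - c) 1)
    (hbound : ∀ x ∈ Ioo 0 1, |g x| ≤ K * min x (1 - x) ^ r) :
    |∫ x in 1 - c..1, g x| ≤ K * c ^ (r + 1) / (r + 1) := by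
  have hreflect : ∫ x in 0..c, g (1 - x) = ∫ x in 1 - c..1, g x := by
    simp [intervalIntegral.integral_comp_sub_left g 1]
  rw [← hreflect]
  refine abs_integral_left_end_le hr hc0 hc ?_ fun x hx => ?_
  · simpa using (hg.comp_sub_left 1).symm
  · simpa [min_comm] using hbound (1 - x) ⟨by linarith [hx.2], by linarith [hx.1]⟩

theorem integral_Ioo_eq_integral_add_add {E : Type*} [NormedAddCommGroup E] [NormedSpace ℝ E]
    {f : ℝ → E} {a b u v : ℝ} (hau : a ≤ u) (huv : u ≤ v) (hvb : v ≤ b)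
    (hf : IntegrableOn f (Ioo a b)) :
    ∫ x in Ioo a b, f x = (∫ x in a..u, f x) + (∫ x in u..v, f x) + ∫ x in v..b, f x := by
  have hab : a ≤ b := hau.trans (huv.trans hvb)
  have hfI : IntervalIntegrable f volume a b :=
    (intervalIntegrable_iff_integrableOn_Ioo_of_le hab).2 hf
  have hsub {p q : ℝ} (hp : a ≤ p) (hpq : p ≤ q) (hq : q ≤ b) :
      IntervalIntegrable f volume p q :=
    hfI.mono_set (by rw [uIcc_of_le hpq, uIcc_of_le hab]; exact Icc_subset_Icc hp hq)
  rw [intervalIntegral.integral_add_adjacent_intervals (hsub le_rfl hau (huv.trans hvb))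
      (hsub hau huv hvb), intervalIntegral.integral_add_adjacent_intervals
      (hsub le_rfl (hau.trans huv) hvb) (hsub (hau.trans huv) hvb le_rfl),
    intervalIntegral.integral_of_le hab, integral_Ioc_eq_integral_Ioo]

noncomputable def quantileWeight (x : ℝ) : ℝ := (x * (1 - x)) ^ ((3 : ℝ) / 2)

theorem continuous_quantileWeight : Continuous quantileWeight :=
  (Real.continuous_rpow_const (by norm_num)).comp (by fun_prop)

theorem quantileWeight_pos {x : ℝ} (hx : x ∈ Ioo 0 1) : 0 < quantileWeight x :=
  Real.rpow_pos_of_pos (mul_pos hx.1 (sub_pos.2 hx.2)) _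

theorem rpow_neg_three_halves_le_four {y : ℝ} (hy : 1 / 2 ≤ y) : y ^ (-(3 / 2) : ℝ) ≤ 4 :=
  calc y ^ (-(3 / 2) : ℝ) ≤ (1 / 2) ^ (-(3 / 2) : ℝ) :=
        Real.rpow_le_rpow_of_nonpos (by norm_num) hy (by norm_num)
    _ = 2 ^ (3 / 2 : ℝ) := by
        rw [one_div, Real.inv_rpow (by norm_num), Real.rpow_neg (by norm_num), inv_inv]
    _ ≤ 2 ^ (2 : ℝ) := Real.rpow_le_rpow_of_exponent_le (by norm_num) (by norm_num)
    _ = 4 := by norm_num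

theorem inv_quantileWeight_le {x : ℝ} (hx : x ∈ Ioo 0 1) :
    (quantileWeight x)⁻¹ ≤ 4 * (x ^ (-(3 / 2) : ℝ) + (1 - x) ^ (-(3 / 2) : ℝ)) := by
  have hx0 := hx.1.le
  have hx1 := (sub_pos.2 hx.2).le
  have hx0' : 0 ≤ x ^ (-(3 / 2) : ℝ) := Real.rpow_nonneg hx0 _
  have hx1' : 0 ≤ (1 - x) ^ (-(3 / 2) : ℝ) := Real.rpow_nonneg hx1 _
  rw [quantileWeight, ← Real.rpow_neg (mul_nonneg hx0 hx1), Real.mul_rpow hx0 hx1]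
  rcases le_total x (1 / 2) with h | h
  · nlinarith [rpow_neg_three_halves_le_four (show 1 / 2 ≤ 1 - x by linarith)]
  · nlinarith [rpow_neg_three_halves_le_four h]

theorem integral_inv_quantileWeight_le {t : ℝ} (ht0 : 0 < t) (ht : t ≤ 1 / 2) :
    ∫ x in t..1 - t, (quantileWeight x)⁻¹ ≤ 16 * t ^ (-(1 / 2) : ℝ) := by
  have hle : t ≤ 1 - t := by linarith
  have hsub : Icc t (1 - t) ⊆ Ioo 0 1 := Icc_subset_Ioo ht0 (by linarith)
  have h0 : (0 : ℝ) ∉ uIcc t (1 - t) := by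
    rw [uIcc_of_le hle]
    exact fun h => ht0.not_ge h.1
  have hpow : IntervalIntegrable (fun x : ℝ => x ^ (-(3 / 2) : ℝ)) volume t (1 - t) :=
    intervalIntegral.intervalIntegrable_rpow (Or.inr h0)
  have hpow' : IntervalIntegrable (fun x : ℝ => (1 - x) ^ (-(3 / 2) : ℝ)) volume t (1 - t) := by
    simpa using (hpow.comp_sub_left 1).symm
  have hreflect :
      ∫ x in t..1 - t, (1 - x) ^ (-(3 / 2) : ℝ) = ∫ x in t..1 - t, x ^ (-(3 / 2) : ℝ) := by
    simp [intervalIntegral.integral_comp_sub_left (fun x : ℝ => x ^ (-(3 / 2) : ℝ))]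
  have hbound : ∫ x in t..1 - t, x ^ (-(3 / 2) : ℝ) ≤ 2 * t ^ (-(1 / 2) : ℝ) := by
    convert integral_rpow_le_of_lt_neg_one (r := -(3 / 2)) (by norm_num) ht0 hle using 1
    norm_num
    ring
  calc ∫ x in t..1 - t, (quantileWeight x)⁻¹
      ≤ ∫ x in t..1 - t, 4 * (x ^ (-(3 / 2) : ℝ) + (1 - x) ^ (-(3 / 2) : ℝ)) :=
        intervalIntegral.integral_mono_on hle
          ((continuous_quantileWeight.continuousOn.inv₀ fun x hx =>
            (quantileWeight_pos (hsub hx)).ne').intervalIntegrable_of_Icc hle)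
          ((hpow.add hpow').const_mul 4) fun x hx => inv_quantileWeight_le (hsub hx)
    _ = 8 * ∫ x in t..1 - t, x ^ (-(3 / 2) : ℝ) := by
        rw [intervalIntegral.integral_const_mul, intervalIntegral.integral_add hpow hpow',
          hreflect]
        ring
    _ ≤ 16 * t ^ (-(1 / 2) : ℝ) := by linarith

noncomputable def weightedEnergy (γ' : ℝ → ℝ) : ℝ :=
  ∫ x in Ioo 0 1, quantileWeight x * γ' x ^ 2

section Quantile

variable {γ γ' : ℝ → ℝ}

theorem integral_abs_le_weightedEnergy_mul_rpow (hcont : ContinuousOn γ' (Ioo 0 1))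
    (hint : IntegrableOn (fun x => quantileWeight x * γ' x ^ 2) (Ioo 0 1))
    {t : ℝ} (ht0 : 0 < t) (ht : t ≤ 1 / 2) :
    ∫ x in t..1 - t, |γ' x| ≤ (weightedEnergy γ' / 2 + 8) * t ^ (-(1 / 4) : ℝ) := by
  have hle : t ≤ 1 - t := by linarith
  have hsub : Icc t (1 - t) ⊆ Ioo 0 1 := Icc_subset_Ioo ht0 (by linarith)
  have hwpos : ∀ x ∈ Icc t (1 - t), 0 < quantileWeight x := fun x hx =>
    quantileWeight_pos (hsub hx)
  have hγ'c : ContinuousOn γ' (Icc t (1 - t)) := hcont.mono hsub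
  have hamgm := two_mul_integral_abs_le hle (Real.rpow_pos_of_pos ht0 (-(1 / 4))) hwpos
    (hγ'c.intervalIntegrable_of_Icc hle)
    ((continuous_quantileWeight.continuousOn.mul (hγ'c.pow 2)).intervalIntegrable_of_Icc hle)
    ((continuous_quantileWeight.continuousOn.inv₀ fun x hx =>
      (hwpos x hx).ne').intervalIntegrable_of_Icc hle)
  have henergy : ∫ x in t..1 - t, quantileWeight x * γ' x ^ 2 ≤ weightedEnergy γ' := by
    rw [intervalIntegral.integral_of_le hle]
    refine setIntegral_mono_set hint ?_ (Ioc_subset_Icc_self.trans hsub).eventuallyLE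
    filter_upwards [ae_restrict_mem measurableSet_Ioo] with x hx
    exact mul_nonneg (quantileWeight_pos hx).le (sq_nonneg _)
  have hexp : (t ^ (-(1 / 4) : ℝ))⁻¹ * t ^ (-(1 / 2) : ℝ) = t ^ (-(1 / 4) : ℝ) := by
    rw [← Real.rpow_neg ht0.le, ← Real.rpow_add ht0]
    norm_num
  suffices 2 * ∫ x in t..1 - t, |γ' x|
      ≤ 2 * ((weightedEnergy γ' / 2 + 8) * t ^ (-(1 / 4) : ℝ)) by
    linarith
  calc 2 * ∫ x in t..1 - t, |γ' x|
      ≤ t ^ (-(1 / 4) : ℝ) * (∫ x in t..1 - t, quantileWeight x * γ' x ^ 2)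
          + (t ^ (-(1 / 4) : ℝ))⁻¹ * ∫ x in t..1 - t, (quantileWeight x)⁻¹ := hamgm
    _ ≤ t ^ (-(1 / 4) : ℝ) * weightedEnergy γ'
          + (t ^ (-(1 / 4) : ℝ))⁻¹ * (16 * t ^ (-(1 / 2) : ℝ)) := by
        gcongr
        exact integral_inv_quantileWeight_le ht0 ht
    _ = 2 * ((weightedEnergy γ' / 2 + 8) * t ^ (-(1 / 4) : ℝ)) := by
        rw [mul_left_comm, hexp]
        ring

theorem abs_le_weightedEnergy_mul_rpow (hderiv : ∀ x ∈ Ioo 0 1, HasDerivAt γ (γ' x) x)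
    (hcont : ContinuousOn γ' (Ioo 0 1))
    (hint : IntegrableOn (fun x => quantileWeight x * γ' x ^ 2) (Ioo 0 1)) {x : ℝ}
    (hx : x ∈ Ioo 0 1) :
    |γ x| ≤ (|γ (1 / 2)| + weightedEnergy γ' / 2 + 8) * min x (1 - x) ^ (-(1 / 4) : ℝ) := by
  set t := min x (1 - x)
  have ht0 : 0 < t := lt_min hx.1 (sub_pos.2 hx.2)
  have ht : t ≤ 1 / 2 := by linarith [min_le_left x (1 - x), min_le_right x (1 - x)]
  have hsub : Icc t (1 - t) ⊆ Ioo 0 1 := Icc_subset_Ioo ht0 (by linarith)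
  have hxI : x ∈ Icc t (1 - t) := ⟨min_le_left _ _, by linarith [min_le_right x (1 - x)]⟩
  have hdiff := abs_sub_le_integral_abs_deriv (fun y hy => hderiv y (hsub hy))
    ((hcont.mono hsub).intervalIntegrable_of_Icc (by linarith)) ⟨ht, by linarith⟩ hxI
  have hone : 1 ≤ t ^ (-(1 / 4) : ℝ) :=
    Real.one_le_rpow_of_pos_of_le_one_of_nonpos ht0 (by linarith) (by norm_num)
  calc |γ x| ≤ |γ (1 / 2)| + |γ x - γ (1 / 2)| := by
        linarith [abs_sub_abs_le_abs_sub (γ x) (γ (1 / 2))]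
    _ ≤ |γ (1 / 2)| * t ^ (-(1 / 4) : ℝ)
          + (weightedEnergy γ' / 2 + 8) * t ^ (-(1 / 4) : ℝ) :=
        add_le_add (le_mul_of_one_le_right (abs_nonneg _) hone)
          (hdiff.trans (integral_abs_le_weightedEnergy_mul_rpow hcont hint ht0 ht))
    _ = _ := by ring

theorem abs_sum_sub_mul_integral_middle_le (hderiv : ∀ x ∈ Ioo 0 1, HasDerivAt γ (γ' x) x)
    (hcont : ContinuousOn γ' (Ioo 0 1))
    (hint : IntegrableOn (fun x => quantileWeight x * γ' x ^ 2) (Ioo 0 1)) {n : ℕ} {c : ℝ}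
    (hc : 2 * (n + 1) * c = 1) :
    |∑ i ∈ Finset.Icc 1 n, γ (i / (n + 1)) - (n + 1) * ∫ x in c..1 - c, γ x|
      ≤ (|γ (1 / 2)| + weightedEnergy γ' / 2 + 8) * c ^ (-(1 / 4) : ℝ) := by
  have hm : (0 : ℝ) < n + 1 := by positivity
  have hc0 : 0 < c := pos_of_mul_pos_right (hc.symm ▸ one_pos) (by positivity)
  have hc2 : c ≤ 1 / 2 := by nlinarith [(Nat.cast_nonneg n : (0 : ℝ) ≤ n)]
  have hend : c + n * (2 * c) = 1 - c := by linear_combination hc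
  have hsub : Icc c (1 - c) ⊆ Ioo 0 1 := Icc_subset_Ioo hc0 (by linarith)
  -- `(j + 1) / (n + 1)` is the midpoint of the `j`-th cell `[c + j (2 c), c + (j + 1) (2 c)]`
  have hsum : ∑ i ∈ Finset.Icc 1 n, γ (i / (n + 1))
      = ∑ j ∈ Finset.range n, γ (c + j * (2 * c) + c) := by
    rw [← Finset.Ico_add_one_right_eq_Icc, Finset.sum_Ico_eq_sum_range, add_tsub_cancel_right]
    refine Finset.sum_congr rfl fun j _ => congrArg γ ?_
    rw [div_eq_iff hm.ne']
    push_cast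
    linear_combination (-(1 : ℝ) - j) * hc
  have hcells := abs_mul_sum_sub_integral_le (by positivity) (f := γ) (a := c) (n := n)
    (t := fun j => c + j * (2 * c) + c) (fun j _ => ⟨by linarith, by linarith⟩)
    (fun x hx => hderiv x (hsub (hend ▸ hx)))
    ((hcont.mono hsub).intervalIntegrable_of_Icc (by linarith) |>.mono_set (by rw [hend]))
  rw [hend] at hcells
  rw [hsum]
  set S := ∑ j ∈ Finset.range n, γ (c + j * (2 * c) + c)
  calc |S - (n + 1) * ∫ x in c..1 - c, γ x|
      = |(n + 1) * (2 * c * S - ∫ x in c..1 - c, γ x)| := by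
        congr 1
        linear_combination -S * hc
    _ = (n + 1) * |2 * c * S - ∫ x in c..1 - c, γ x| := by rw [abs_mul, abs_of_pos hm]
    _ ≤ (n + 1) * (2 * c * ∫ x in c..1 - c, |γ' x|) := by gcongr
    _ = ∫ x in c..1 - c, |γ' x| := by linear_combination (∫ x in c..1 - c, |γ' x|) * hc
    _ ≤ (weightedEnergy γ' / 2 + 8) * c ^ (-(1 / 4) : ℝ) :=
        integral_abs_le_weightedEnergy_mul_rpow hcont hint hc0 hc2
    _ ≤ (|γ (1 / 2)| + weightedEnergy γ' / 2 + 8) * c ^ (-(1 / 4) : ℝ) := by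
        gcongr
        linarith [abs_nonneg (γ (1 / 2))]

theorem abs_sum_sub_mul_integral_le (hderiv : ∀ x ∈ Ioo 0 1, HasDerivAt γ (γ' x) x)
    (hcont : ContinuousOn γ' (Ioo 0 1))
    (hint : IntegrableOn (fun x => quantileWeight x * γ' x ^ 2) (Ioo 0 1))
    (hγint : IntegrableOn γ (Ioo 0 1)) (n : ℕ) :
    |∑ i ∈ Finset.Icc 1 n, γ (i / (n + 1)) - (n + 1) * ∫ x in Ioo 0 1, γ x|
      ≤ 7 / 3 * (|γ (1 / 2)| + weightedEnergy γ' / 2 + 8) * (2 * (n + 1)) ^ (1 / 4 : ℝ) := by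
  set K := |γ (1 / 2)| + weightedEnergy γ' / 2 + 8
  set c : ℝ := (2 * (n + 1))⁻¹ with hc_def
  have hc : 2 * (n + 1) * c = 1 := mul_inv_cancel₀ (by positivity)
  have hc0 : 0 < c := by positivity
  have hc2 : c ≤ 1 / 2 := by nlinarith [(Nat.cast_nonneg n : (0 : ℝ) ≤ n)]
  have hγ01 : IntervalIntegrable γ volume 0 1 :=
    (intervalIntegrable_iff_integrableOn_Ioo_of_le zero_le_one).2 hγint
  have hgrowth (x : ℝ) (hx : x ∈ Ioo 0 1) := abs_le_weightedEnergy_mul_rpow hderiv hcont hint hx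
  have hleft := abs_integral_left_end_le (r := -(1 / 4)) (by norm_num) hc0.le hc2
    (hγ01.mono_set (by rw [uIcc_of_le hc0.le, uIcc_of_le zero_le_one]; gcongr; linarith)) hgrowth
  have hright := abs_integral_right_end_le (r := -(1 / 4)) (by norm_num) hc0.le hc2
    (hγ01.mono_set (by rw [uIcc_of_le (by linarith), uIcc_of_le zero_le_one]; gcongr; linarith))
    hgrowth
  have hmid := abs_sum_sub_mul_integral_middle_le hderiv hcont hint hc
  have hc_inv : c ^ (-(1 / 4) : ℝ) = (2 * (n + 1)) ^ (1 / 4 : ℝ) := by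
    rw [Real.rpow_neg hc0.le, hc_def, Real.inv_rpow (by positivity), inv_inv]
  rw [Real.rpow_add_one hc0.ne'] at hleft hright
  rw [integral_Ioo_eq_integral_add_add (u := c) (v := 1 - c) hc0.le (by linarith) (by linarith)
    hγint, ← hc_inv]
  set S := ∑ i ∈ Finset.Icc 1 n, γ (i / (n + 1))
  calc |S - (n + 1) * ((∫ x in 0..c, γ x) + (∫ x in c..1 - c, γ x) + ∫ x in 1 - c..1, γ x)|
      = |(S - (n + 1) * ∫ x in c..1 - c, γ x) - (n + 1) * (∫ x in 0..c, γ x)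
          - (n + 1) * ∫ x in 1 - c..1, γ x| := by ring_nf
    _ ≤ |S - (n + 1) * ∫ x in c..1 - c, γ x| + |(n + 1) * ∫ x in 0..c, γ x|
          + |(n + 1) * ∫ x in 1 - c..1, γ x| :=
        (abs_sub _ _).trans (by gcongr; exact abs_sub _ _)
    _ = |S - (n + 1) * ∫ x in c..1 - c, γ x| + (n + 1) * |∫ x in 0..c, γ x|
          + (n + 1) * |∫ x in 1 - c..1, γ x| := by
        simp only [abs_mul, abs_of_pos (by positivity : (0 : ℝ) < n + 1)]
    _ ≤ K * c ^ (-(1 / 4) : ℝ) + (n + 1) * (K * (c ^ (-(1 / 4) : ℝ) * c) / (-(1 / 4) + 1))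
          + (n + 1) * (K * (c ^ (-(1 / 4) : ℝ) * c) / (-(1 / 4) + 1)) := by gcongr
    _ = 7 / 3 * K * c ^ (-(1 / 4) : ℝ) := by
        linear_combination (4 / 3 * K * c ^ (-(1 / 4) : ℝ)) * hc

end Quantile

theorem tendsto_div_sqrt_of_abs_le_rpow {u : ℕ → ℝ} {C p : ℝ} (hp0 : 0 ≤ p)
    (hp : p < 1 / 2) (hu : ∀ n : ℕ, |u n| ≤ C * ((n : ℝ) + 1) ^ p) :
    Tendsto (fun n : ℕ => u n / √n) atTop (𝓝 0) := by
  have hC : 0 ≤ C := by simpa using (abs_nonneg _).trans (hu 0)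
  have hlim : Tendsto (fun n : ℕ => C * 2 ^ p * (n : ℝ) ^ (-(1 / 2 - p))) atTop (𝓝 0) := by
    simpa using ((tendsto_rpow_neg_atTop (by linarith : 0 < 1 / 2 - p)).comp
      tendsto_natCast_atTop_atTop).const_mul (C * 2 ^ p)
  refine squeeze_zero_norm' ?_ hlim
  filter_upwards [eventually_ge_atTop 1] with n hn
  have hn : (1 : ℝ) ≤ n := by exact_mod_cast hn
  have hn0 : (0 : ℝ) < n := by linarith
  have hsqrt : 0 < √(n : ℝ) := Real.sqrt_pos.2 hn0
  rw [Real.norm_eq_abs, abs_div, abs_of_pos hsqrt, div_le_iff₀ hsqrt]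
  calc |u n| ≤ C * ((n : ℝ) + 1) ^ p := hu n
    _ ≤ C * (2 * n) ^ p := by gcongr; linarith
    _ = C * 2 ^ p * (n : ℝ) ^ (-(1 / 2 - p)) * √n := by
      rw [Real.sqrt_eq_rpow, mul_assoc (C * 2 ^ p), ← Real.rpow_add hn0,
        Real.mul_rpow zero_le_two hn0.le, show -(1 / 2 - p) + 1 / 2 = p by ring, mul_assoc]

/-- Lemma 3.3: if `γ` is C¹ on (0,1) with `∫₀¹ (x(1−x))^{3/2} γ'(x)² dx < ∞` and `γ` is
integrable on (0,1), then `(1/√n) ∑_{i=1}^n γ(i/(n+1)) − √n ∫₀¹ γ(x) dx → 0`. -/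
theorem riemann_sum_quantile_correction
    (γ γ' : ℝ → ℝ)
    (hderiv : ∀ x ∈ Ioo (0:ℝ) 1, HasDerivAt γ (γ' x) x)
    (hcont : ContinuousOn γ' (Ioo (0:ℝ) 1))
    (hint : IntegrableOn (fun x => (x * (1 - x)) ^ ((3:ℝ)/2) * (γ' x) ^ 2) (Ioo (0:ℝ) 1))
    (hγint : IntegrableOn γ (Ioo (0:ℝ) 1)) :
    Tendsto (fun n : ℕ =>
        (1 / Real.sqrt n) * ∑ i ∈ Finset.Icc 1 n, γ ((i : ℝ) / (n + 1))
          - Real.sqrt n * ∫ x in Ioo (0:ℝ) 1, γ x)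
      atTop (𝓝 0) := by
  set I := ∫ x in Ioo (0:ℝ) 1, γ x with hI
  set K := |γ (1 / 2)| + weightedEnergy γ' / 2 + 8 with hK
  have hbound (n : ℕ) : |∑ i ∈ Finset.Icc 1 n, γ ((i : ℝ) / (n + 1)) - n * I|
      ≤ (7 / 3 * K * 2 ^ (1 / 4 : ℝ) + |I|) * ((n : ℝ) + 1) ^ (1 / 4 : ℝ) := by
    have hkey := abs_sum_sub_mul_integral_le hderiv hcont hint hγint n
    rw [← hI, ← hK, Real.mul_rpow zero_le_two (by positivity)] at hkey
    have hone : 1 ≤ ((n : ℝ) + 1) ^ (1 / 4 : ℝ) :=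
      Real.one_le_rpow (by linarith) (by norm_num)
    rw [show ∀ S : ℝ, S - n * I = (S - (n + 1) * I) + I by intro S; ring]
    nlinarith [abs_add_le (∑ i ∈ Finset.Icc 1 n, γ ((i : ℝ) / (n + 1)) - (n + 1) * I) I,
      abs_nonneg I]
  refine (tendsto_div_sqrt_of_abs_le_rpow (by norm_num) (by norm_num) hbound).congr fun n => ?_
  rw [sub_div, mul_div_right_comm, Real.div_sqrt, one_div_mul_eq_div]
end

section
/- With g_n defined as the piecewise function g_n(y) = y − (i−1)/n for (i−1)/n ≤ y < i/(n+1) and g_n(y) = y − i/n for i/(n+1) ≤ y < i/n (1 ≤ i ≤ n), one has n ∫₀¹ g_n(y)² (y(1−y))^{−3/2} dy → 0 as n → ∞. -/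
/-!
On `[0, 1)` every tooth of `g_n` satisfies `|g_n(y)| ≤ min(y, 1 - y, 1/n)`, hence
`n g_n(y)² ≤ min(min(y, 1 - y), 1/n)`. These bounds tend to `0` pointwise and are dominated by
`min(y, 1 - y) (y(1 - y))^{-3/2} ≤ 2 (y(1 - y))^{-1/2}`, the integrable Beta(1/2, 1/2) kernel,
so dominated convergence gives the limit.
-/

open MeasureTheory Set Filter Topology

theorem integrableOn_rpow_mul_one_sub_rpow {a b : ℝ} (ha : 0 < a) (hb : 0 < b) :
    IntegrableOn (fun x : ℝ => x ^ (a - 1) * (1 - x) ^ (b - 1)) (Ioo 0 1) := by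
  have h := Complex.betaIntegral_convergent (u := a) (v := b) (by simpa) (by simpa)
  rw [intervalIntegrable_iff_integrableOn_Ioc_of_le zero_le_one] at h
  refine (IntegrableOn.mono_set h.re Ioo_subset_Ioc_self).congr_fun (fun x hx => ?_)
    measurableSet_Ioo
  have h1 : (0:ℝ) ≤ 1 - x := by linarith [hx.2]
  simp only [RCLike.re_to_complex, ← Complex.ofReal_one, ← Complex.ofReal_sub]
  rw [← Complex.ofReal_cpow hx.1.le, ← Complex.ofReal_cpow h1, ← Complex.ofReal_mul,
    Complex.ofReal_re]

lemma abs_sawtooth_le {f : ℝ → ℝ} {n : ℕ} (hn : 1 ≤ n)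
    (h₁ : ∀ i : ℕ, 1 ≤ i → i ≤ n → ∀ y : ℝ,
        ((i : ℝ) - 1) / n ≤ y → y < (i : ℝ) / (n + 1) → f y = y - ((i : ℝ) - 1) / n)
    (h₂ : ∀ i : ℕ, 1 ≤ i → i ≤ n → ∀ y : ℝ,
        (i : ℝ) / (n + 1) ≤ y → y < (i : ℝ) / n → f y = y - (i : ℝ) / n)
    {y : ℝ} (hy : y ∈ Ico 0 1) : |f y| ≤ min (min y (1 - y)) (n : ℝ)⁻¹ := by
  obtain ⟨hy0, hy1⟩ := hy
  have hn0 : (0:ℝ) < n := by exact_mod_cast hn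
  set k := ⌊n * y⌋₊
  have hk : (k:ℝ) ≤ n * y := Nat.floor_le (by positivity)
  have hk' : n * y < k + 1 := Nat.lt_floor_add_one _
  have hkn : k + 1 ≤ n := by
    have : (k:ℝ) < n := by nlinarith
    exact_mod_cast this
  have hkn' : (k:ℝ) + 1 ≤ n := by exact_mod_cast hkn
  have hlo : (((k + 1 : ℕ) : ℝ) - 1) / n ≤ y := by
    rw [div_le_iff₀ hn0]; push_cast; linarith
  have hhi : y < ((k + 1 : ℕ) : ℝ) / n := by
    rw [lt_div_iff₀ hn0]; push_cast; linarith
  have hr : (n:ℝ)⁻¹ * n = 1 := inv_mul_cancel₀ hn0.ne'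
  rcases lt_or_ge y (((k + 1 : ℕ) : ℝ) / (n + 1)) with h | h
  · rw [h₁ (k + 1) le_add_self hkn y hlo h]
    rw [lt_div_iff₀ (by positivity)] at h
    push_cast at h ⊢
    have hc : (k:ℝ) / n * n = k := div_mul_cancel₀ _ hn0.ne'
    rw [add_sub_cancel_right, abs_of_nonneg (by rw [sub_nonneg, div_le_iff₀ hn0]; linarith)]
    refine le_min (le_min ?_ ?_) ?_
    · nlinarith
    · nlinarith
    · nlinarith
  · rw [h₂ (k + 1) le_add_self hkn y h hhi]
    rw [div_le_iff₀ (by positivity)] at h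
    push_cast at h hhi ⊢
    have hc : ((k:ℝ) + 1) / n * n = k + 1 := div_mul_cancel₀ _ hn0.ne'
    rw [abs_of_nonpos (by linarith), neg_sub]
    refine le_min (le_min ?_ ?_) ?_
    · nlinarith
    · nlinarith
    · nlinarith

lemma min_one_sub_mul_rpow_le {y : ℝ} (hy : y ∈ Ioo 0 1) :
    min y (1 - y) * (y * (1 - y)) ^ (-(3:ℝ)/2) ≤
      2 * (y ^ (-(1:ℝ)/2) * (1 - y) ^ (-(1:ℝ)/2)) := by
  obtain ⟨hy0, hy1⟩ := hy
  have hp : 0 < y * (1 - y) := mul_pos hy0 (by linarith)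
  have hmin : min y (1 - y) ≤ 2 * (y * (1 - y)) := by
    rcases le_total y (1 / 2) with h | h
    · nlinarith [min_le_left y (1 - y)]
    · nlinarith [min_le_right y (1 - y)]
  calc min y (1 - y) * (y * (1 - y)) ^ (-(3:ℝ)/2)
      = min y (1 - y) / (y * (1 - y)) * (y * (1 - y)) ^ (-(1:ℝ)/2) := by
        rw [show (-(3:ℝ)/2) = -1 + -(1:ℝ)/2 by norm_num, Real.rpow_add hp, Real.rpow_neg_one]
        ring
    _ ≤ 2 * (y * (1 - y)) ^ (-(1:ℝ)/2) := by
        gcongr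
        rwa [div_le_iff₀ hp]
    _ = 2 * (y ^ (-(1:ℝ)/2) * (1 - y) ^ (-(1:ℝ)/2)) := by
        rw [Real.mul_rpow hy0.le (by linarith)]

lemma integrableOn_min_one_sub_mul_rpow :
    IntegrableOn (fun y : ℝ => min y (1 - y) * (y * (1 - y)) ^ (-(3:ℝ)/2)) (Ioo 0 1) := by
  refine ((integrableOn_rpow_mul_one_sub_rpow one_half_pos one_half_pos).const_mul 2).mono'
    (by fun_prop : Measurable _).aestronglyMeasurable
    (ae_restrict_of_forall_mem measurableSet_Ioo fun y hy => ?_)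
  have h1 : 0 ≤ 1 - y := by linarith [hy.2]
  rw [Real.norm_of_nonneg
    (mul_nonneg (le_min hy.1.le h1) (Real.rpow_nonneg (mul_nonneg hy.1.le h1) _))]
  convert min_one_sub_mul_rpow_le hy using 4 <;> norm_num

section DominatedConvergence

variable {α : Type*} [MeasurableSpace α] {μ : Measure α} {φ w : α → ℝ}

lemma ae_norm_min_mul_le (hφ0 : ∀ᵐ x ∂μ, 0 ≤ φ x) (hw0 : ∀ᵐ x ∂μ, 0 ≤ w x) {c : ℝ}
    (hc : 0 ≤ c) :
    ∀ᵐ x ∂μ, ‖min (φ x) c * w x‖ ≤ φ x * w x := by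
  filter_upwards [hφ0, hw0] with x hφx hwx
  rw [Real.norm_of_nonneg (mul_nonneg (le_min hφx hc) hwx)]
  exact mul_le_mul_of_nonneg_right (min_le_left _ _) hwx

lemma tendsto_integral_min_inv_mul (hφ : Measurable φ) (hw : Measurable w)
    (hφ0 : ∀ᵐ x ∂μ, 0 ≤ φ x) (hw0 : ∀ᵐ x ∂μ, 0 ≤ w x)
    (hint : Integrable (fun x => φ x * w x) μ) :
    Tendsto (fun n : ℕ => ∫ x, min (φ x) (n : ℝ)⁻¹ * w x ∂μ) atTop (𝓝 0) := by
  have hlim : ∀ᵐ x ∂μ, Tendsto (fun n : ℕ => min (φ x) (n : ℝ)⁻¹ * w x) atTop (𝓝 0) := by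
    filter_upwards [hφ0] with x hφx
    simpa [min_eq_right hφx] using
      ((tendsto_const_nhds (x := φ x)).min tendsto_inv_atTop_nhds_zero_nat).mul_const (w x)
  simpa using tendsto_integral_of_dominated_convergence _
    (fun n => (by fun_prop : Measurable _).aestronglyMeasurable) hint
    (fun n => ae_norm_min_mul_le hφ0 hw0 (by positivity)) hlim

lemma norm_mul_integral_sq_mul_le {f : α → ℝ} {c : ℝ} (hc : 0 < c)
    (hf : ∀ᵐ x ∂μ, |f x| ≤ min (φ x) c⁻¹) (hw0 : ∀ᵐ x ∂μ, 0 ≤ w x)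
    (hint : Integrable (fun x => min (φ x) c⁻¹ * w x) μ) :
    ‖c * ∫ x, f x ^ 2 * w x ∂μ‖ ≤ ∫ x, min (φ x) c⁻¹ * w x ∂μ := by
  rw [← integral_const_mul]
  refine norm_integral_le_of_norm_le hint ?_
  filter_upwards [hf, hw0] with x hfx hwx
  have hsq : c * f x ^ 2 ≤ min (φ x) c⁻¹ :=
    calc c * f x ^ 2 = c * |f x| * |f x| := by rw [mul_assoc, ← sq, sq_abs]
      _ ≤ c * c⁻¹ * min (φ x) c⁻¹ := by
        gcongr
        exact hfx.trans (min_le_right _ _)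
      _ = min (φ x) c⁻¹ := by rw [mul_inv_cancel₀ hc.ne', one_mul]
  rw [← mul_assoc, Real.norm_of_nonneg (by positivity)]
  exact mul_le_mul_of_nonneg_right hsq hwx

theorem tendsto_natCast_mul_integral_sq_mul {f : ℕ → α → ℝ} (hφ : Measurable φ)
    (hw : Measurable w) (hφ0 : ∀ᵐ x ∂μ, 0 ≤ φ x) (hw0 : ∀ᵐ x ∂μ, 0 ≤ w x)
    (hint : Integrable (fun x => φ x * w x) μ)
    (hf : ∀ᶠ n : ℕ in atTop, ∀ᵐ x ∂μ, |f n x| ≤ min (φ x) (n : ℝ)⁻¹) :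
    Tendsto (fun n : ℕ => (n : ℝ) * ∫ x, f n x ^ 2 * w x ∂μ) atTop (𝓝 0) := by
  refine squeeze_zero_norm' ?_ (tendsto_integral_min_inv_mul hφ hw hφ0 hw0 hint)
  filter_upwards [hf, eventually_gt_atTop 0] with n hfn hn
  exact norm_mul_integral_sq_mul_le (by positivity) (by simpa using hfn) hw0
    (hint.mono' (by fun_prop : Measurable _).aestronglyMeasurable
      (ae_norm_min_mul_le hφ0 hw0 (by positivity)))

end DominatedConvergence

/-- For the sawtooth functions `g_n` (with `g_n(y) = y − (i−1)/n` on `[(i−1)/n, i/(n+1))` and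
`g_n(y) = y − i/n` on `[i/(n+1), i/n)`, `1 ≤ i ≤ n`), one has
`n ∫₀¹ g_n(y)² (y(1−y))^{−3/2} dy → 0` as `n → ∞`. -/
theorem sawtooth_weighted_integral_tendsto_zero
    (g : ℕ → ℝ → ℝ)
    (hg₁ : ∀ n : ℕ, 1 ≤ n → ∀ i : ℕ, 1 ≤ i → i ≤ n → ∀ y : ℝ,
        ((i : ℝ) - 1) / n ≤ y → y < (i : ℝ) / (n + 1) → g n y = y - ((i : ℝ) - 1) / n)
    (hg₂ : ∀ n : ℕ, 1 ≤ n → ∀ i : ℕ, 1 ≤ i → i ≤ n → ∀ y : ℝ,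
        (i : ℝ) / (n + 1) ≤ y → y < (i : ℝ) / n → g n y = y - (i : ℝ) / n) :
    Tendsto (fun n : ℕ =>
        (n : ℝ) * ∫ y in Ioo (0:ℝ) 1, (g n y) ^ 2 * (y * (1 - y)) ^ (-(3:ℝ)/2))
      atTop (𝓝 0) := by
  have hmin : ∀ᵐ y ∂volume.restrict (Ioo (0:ℝ) 1), 0 ≤ min y (1 - y) :=
    ae_restrict_of_forall_mem measurableSet_Ioo fun y hy => le_min hy.1.le (by linarith [hy.2])
  have hweight : ∀ᵐ y ∂volume.restrict (Ioo (0:ℝ) 1), 0 ≤ (y * (1 - y)) ^ (-(3:ℝ)/2) :=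
    ae_restrict_of_forall_mem measurableSet_Ioo fun y hy =>
      Real.rpow_nonneg (mul_nonneg hy.1.le (by linarith [hy.2])) _
  refine tendsto_natCast_mul_integral_sq_mul (by fun_prop) (by fun_prop) hmin hweight
    integrableOn_min_one_sub_mul_rpow ?_
  filter_upwards [eventually_ge_atTop 1] with n hn
  exact ae_restrict_of_forall_mem measurableSet_Ioo fun y hy =>
    abs_sawtooth_le hn (hg₁ n hn) (hg₂ n hn) (Ioo_subset_Ico_self hy)
end

section
/- Let e_1, e_2, … be i.i.d. exponential random variables with mean 1 and S_i = e_1 + ⋯ + e_i. Then M := inf_{1 ≤ i ≤ n < ∞} (S_i/i)/(S_{n+1}/(n+1)) satisfies P(M > 0) = 1. -/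
open MeasureTheory ProbabilityTheory Set Filter Topology

/-!
By the strong law of large numbers, `S_n / n → E e_1 > 0` almost surely, and almost surely every
`e_k` is positive. On that event the positive sequence `S_n / n` (`n ≥ 1`) converges to a nonzero
limit, so it and its reciprocal are bounded, and every ratio of two of its terms is bounded below
by a positive constant.
-/

namespace ProbabilityTheory

lemma ae_pos_expMeasure (r : ℝ) : ∀ᵐ x ∂(expMeasure r), 0 < x := by
  have hIic : expMeasure r (Iic 0) = 0 := by
    rw [expMeasure, gammaMeasure, withDensity_apply _ measurableSet_Iic,
      setLIntegral_congr Iio_ae_eq_Iic.symm]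
    exact lintegral_exponentialPDF_of_nonpos le_rfl
  simp only [ae_iff, not_lt]
  exact hIic

lemma integrable_id_expMeasure {r : ℝ} (hr : 0 < r) : Integrable id (expMeasure r) := by
  have hdensity : ∀ x, x * (exponentialPDF r x).toReal
      = (Ioi 0).indicator (fun x ↦ r * (x ^ (1 : ℝ) * Real.exp (-r * x ^ (1 : ℝ)))) x := by
    intro x
    rcases lt_trichotomy x 0 with hx | rfl | hx
    · simp [exponentialPDF_of_neg hx, hx.not_gt]
    · simp
    · rw [exponentialPDF_of_nonneg hx.le, ENNReal.toReal_ofReal (by positivity),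
        indicator_of_mem (mem_Ioi.2 hx), Real.rpow_one]
      ring_nf
  rw [show expMeasure r = volume.withDensity (exponentialPDF r) from rfl,
    integrable_withDensity_iff
      (show Measurable (exponentialPDF r) from (measurable_exponentialPDFReal r).ennreal_ofReal)
      (.of_forall fun _ ↦ ENNReal.ofReal_lt_top)]
  simp only [id, hdensity]
  exact (integrable_indicator_iff measurableSet_Ioi).2
    ((integrableOn_rpow_mul_exp_neg_mul_rpow (by norm_num) one_pos hr).const_mul r)

end ProbabilityTheory

lemma integral_pos_of_ae_pos {α : Type*} [MeasurableSpace α] {μ : Measure α} [NeZero μ]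
    {f : α → ℝ} (hf : ∀ᵐ x ∂μ, 0 < f x) (hfi : Integrable f μ) : 0 < ∫ x, f x ∂μ := by
  rw [integral_pos_iff_support_of_nonneg_ae (hf.mono fun _ hx ↦ hx.le) hfi, pos_iff_ne_zero]
  intro h
  have : ∀ᵐ x ∂μ, False := by
    filter_upwards [hf, measure_eq_zero_iff_ae_notMem.1 h] with x hx hx'
    exact hx' hx.ne'
  exact NeZero.ne μ (ae_eq_bot.1 (eventually_false_iff_eq_bot.1 this))

lemma exists_pos_le_div_of_tendsto {g : ℕ → ℝ} {a : ℝ} (hg : Tendsto g atTop (𝓝 a))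
    (ha : a ≠ 0) (hpos : ∀ n, 0 < g n) : ∃ c > 0, ∀ m n, c ≤ g m / g n := by
  obtain ⟨C, hC⟩ := hg.bddAbove_range
  obtain ⟨B, hB⟩ := (hg.inv₀ ha).bddAbove_range
  have hgC : ∀ n, g n ≤ C := fun n ↦ hC ⟨n, rfl⟩
  have hgB : ∀ n, (g n)⁻¹ ≤ B := fun n ↦ hB ⟨n, rfl⟩
  have hB : 0 < B := (inv_pos.2 (hpos 0)).trans_le (hgB 0)
  have hBC : 0 < B * C := mul_pos hB ((hpos 0).trans_le (hgC 0))
  refine ⟨(B * C)⁻¹, inv_pos.2 hBC, fun m n ↦ ?_⟩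
  calc (B * C)⁻¹ ≤ ((g m)⁻¹ * g n)⁻¹ :=
        inv_anti₀ (mul_pos (inv_pos.2 (hpos m)) (hpos n))
          (mul_le_mul (hgB m) (hgC n) (hpos n).le hB.le)
    _ = g m / g n := by rw [mul_inv, inv_inv, div_eq_mul_inv]

lemma iInf_ratio_running_means_pos {x : ℕ → ℝ} {a : ℝ} (hx : ∀ k, 0 < x k)
    (hmean : Tendsto (fun n : ℕ ↦ (∑ k ∈ Finset.range n, x k) / n) atTop (𝓝 a)) (ha : a ≠ 0) :
    0 < ⨅ p : {p : ℕ × ℕ // 1 ≤ p.1 ∧ p.1 ≤ p.2},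
      ((∑ k ∈ Finset.range p.1.1, x k) / p.1.1) /
        ((∑ k ∈ Finset.range (p.1.2 + 1), x k) / (p.1.2 + 1)) := by
  set g : ℕ → ℝ := fun n ↦ (∑ k ∈ Finset.range (n + 1), x k) / (n + 1 : ℕ)
  have hg : ∀ n, 0 < g n := fun n ↦
    div_pos (Finset.sum_pos (fun k _ ↦ hx k) Finset.nonempty_range_add_one) (by positivity)
  obtain ⟨c, hc, hcg⟩ :=
    exists_pos_le_div_of_tendsto ((tendsto_add_atTop_iff_nat 1).2 hmean) ha hg
  have : Nonempty {p : ℕ × ℕ // 1 ≤ p.1 ∧ p.1 ≤ p.2} := ⟨⟨(1, 1), le_rfl, le_rfl⟩⟩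
  refine hc.trans_le (le_ciInf fun ⟨(i, n), hi, _⟩ ↦ ?_)
  obtain ⟨m, rfl⟩ := Nat.exists_eq_add_of_le' hi
  simpa [g] using hcg m n

/-- For `e_1, e_2, …` i.i.d. exponential(1) with partial sums `S_i = e_1 + ⋯ + e_i`, the
infimum `M = inf_{1 ≤ i ≤ n < ∞} (S_i/i)/(S_{n+1}/(n+1))` is almost surely positive. -/
theorem inf_ratio_partial_sums_exponential_pos
    {Ω : Type*} [MeasurableSpace Ω] (P : Measure Ω) [IsProbabilityMeasure P]
    (e : ℕ → Ω → ℝ) (hemeas : ∀ i, Measurable (e i))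
    (hexp : ∀ i, Measure.map (e i) P = expMeasure 1)
    (hindep : iIndepFun e P)
    (S : ℕ → Ω → ℝ) (hS : ∀ i ω, S i ω = ∑ k ∈ Finset.range i, e k ω)
    (M : Ω → ℝ)
    (hM : ∀ ω, M ω = ⨅ p : {p : ℕ × ℕ // 1 ≤ p.1 ∧ p.1 ≤ p.2},
        (S p.1.1 ω / p.1.1) / (S (p.1.2 + 1) ω / (p.1.2 + 1))) :
    P {ω | 0 < M ω} = 1 := by
  have hident : ∀ i, IdentDistrib (e i) (e 0) P P := fun i ↦
    ⟨(hemeas i).aemeasurable, (hemeas 0).aemeasurable, by rw [hexp i, hexp 0]⟩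
  have hlaw : IdentDistrib (e 0) id P (expMeasure 1) :=
    ⟨(hemeas 0).aemeasurable, aemeasurable_id, by rw [hexp 0, Measure.map_id]⟩
  have hint : Integrable (e 0) P := hlaw.integrable_iff.2 (integrable_id_expMeasure one_pos)
  have hpos : ∀ᵐ ω ∂P, ∀ k, 0 < e k ω := ae_all_iff.2 fun k ↦
    ae_of_ae_map (hemeas k).aemeasurable ((hexp k).symm ▸ ae_pos_expMeasure 1)
  have hmean : 0 < P[e 0] := integral_pos_of_ae_pos (hpos.mono fun _ h ↦ h 0) hint
  have hslln := strong_law_ae_real e hint (fun i j hij ↦ hindep.indepFun hij) hident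
  have hMpos : ∀ᵐ ω ∂P, 0 < M ω := by
    filter_upwards [hslln, hpos] with ω hω hωpos
    simpa only [hM, hS] using iInf_ratio_running_means_pos hωpos hω hmean.ne'
  rw [measure_congr (eventuallyEq_univ.2 hMpos), measure_univ]
end
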